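/- Let n ≥ 2 and let (i_1,…,i_n) be a sequence of natural numbers with i_j ≥ 2 i_{j+1} for 1 ≤ j ≤ n−1. Write ω_{i_1,…,i_n} = Σ_j p_j x_n^j with coefficients p_j ∈ F_2[x_1,…,x_{n−1}]. Then p_j = 0 for all j < i_n, and p_{i_n} = ω_{i_1,…,i_{n−1}}. In other words, ω_{i_1,…,i_n} = ω_{i_1,…,i_{n−1}} x_n^{i_n} plus terms whose exponent of x_n strictly exceeds i_n. -/

import Mathlib

open MvPolynomial

/-- The field with two elements. -/
abbrev F2 := ZMod 2

/-- The polynomial ring `F_2[x_1, …, x_n]`. -/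
abbrev P2 (n : ℕ) := MvPolynomial (Fin n) F2

/-- The Dickson polynomial `ω_j`, viewed inside `F_2[x_1, …, x_n]` (for `j ≤ n`):
the product of all nonzero `F_2`-linear combinations of `x_1, …, x_j`. -/
noncomputable def omegaJ (n j : ℕ) (h : j ≤ n) : P2 n :=
  ∏ c ∈ Finset.univ.filter (fun c : Fin j → F2 => c ≠ 0),
    ∑ i : Fin j, MvPolynomial.C (c i) * MvPolynomial.X (Fin.castLE h i)

/-- `ω_{i_1, …, i_n} = ω_1^{i_1 - 2 i_2} ⋯ ω_{n-1}^{i_{n-1} - 2 i_n} ω_n^{i_n}`,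
with the convention `i_{n+1} = 0`. -/
noncomputable def omegaSeq (n : ℕ) (i : Fin n → ℕ) : P2 n :=
  ∏ j : Fin n,
    omegaJ n (j.val + 1) j.isLt ^
      (i j - 2 * (if h : j.val + 1 < n then i ⟨j.val + 1, h⟩ else 0))

/-!
Split the factors of `ω_{n}` according to the coefficient of `x_n`: those with coefficient `0`
multiply to `ω_{n-1}`, and those with coefficient `1` are the `ℓ + x_n` for all linear forms `ℓ`
in `x_1, …, x_{n-1}`; the one with `ℓ = 0` is `x_n` itself, the others multiply to `ω_{n-1}`
modulo `x_n`. Hence `ω_n ≡ ω_{n-1}^2 x_n` modulo `x_n^2`, and so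
`ω_n^k ≡ ω_{n-1}^{2k} x_n^k` modulo `x_n^{k+1}`. Finally
`ω_{i_1,…,i_n} = B ω_n^{i_n}` and `ω_{i_1,…,i_{n-1}} = B ω_{n-1}^{2 i_n}` for a common factor `B`,
because `i_{n-1} ≥ 2 i_n`.
-/

theorem Ideal.pow_sub_pow_mem_pow_succ {R : Type*} [CommRing R] {I : Ideal R} {a b : R}
    (hb : b ∈ I) (hab : a - b ∈ I ^ 2) (k : ℕ) : a ^ k - b ^ k ∈ I ^ (k + 1) := by
  have ha : a ∈ I := by
    simpa using I.add_mem (Ideal.pow_le_self two_ne_zero hab) hb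
  induction k with
  | zero => simp
  | succ k ih =>
    have h : a ^ (k + 1) - b ^ (k + 1) = a ^ k * (a - b) + (a ^ k - b ^ k) * b := by ring
    rw [h]
    refine Ideal.add_mem _ ?_ ?_
    · simpa only [← pow_add] using Ideal.mul_mem_mul (Ideal.pow_mem_pow ha k) hab
    · simpa only [← pow_succ] using Ideal.mul_mem_mul ih hb

theorem MvPolynomial.mem_span_X_pow_iff {σ R : Type*} [CommSemiring R] (i : σ) (k : ℕ)
    (p : MvPolynomial σ R) : p ∈ Ideal.span {X i ^ k} ↔ ∀ d ∈ p.support, k ≤ d i := by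
  rw [X_pow_eq_monomial, ← Set.image_singleton (f := fun s => monomial s (1 : R)),
    mem_ideal_span_monomial_image]
  simp [Finsupp.single_le_iff]

theorem prod_filter_ne_zero_eq_mul_prod_snoc {M : Type*} [CommMonoid M] {m : ℕ}
    (f : (Fin (m + 1) → F2) → M) :
    ∏ c ∈ Finset.univ.filter (· ≠ 0), f c =
      (∏ c ∈ Finset.univ.filter (· ≠ 0), f (Fin.snoc c 0)) * ∏ c, f (Fin.snoc c 1) := by
  have h0 : (0 : Fin (m + 1) → F2) = Fin.snoc (0 : Fin m → F2) 0 := by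
    ext j; cases j using Fin.lastCases <;> simp
  rw [Finset.prod_filter, Finset.prod_filter, ← (Fin.snocEquiv fun _ => F2).prod_comp,
    Fintype.prod_prod_type, show ∀ g : F2 → M, ∏ a, g a = g 0 * g 1 from Fin.prod_univ_two]
  simp [Fin.snocEquiv, h0, Fin.snoc_inj]

theorem omegaJ_rename {n n' j : ℕ} (h : j ≤ n) (h' : n ≤ n') :
    rename (Fin.castLE h') (omegaJ n j h) = omegaJ n' j (h.trans h') := by
  simp [omegaJ, map_prod, map_sum, Fin.castLE_castLE]

theorem omegaJ_succ_sub_mem (m : ℕ) :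
    omegaJ (m + 1) (m + 1) le_rfl - omegaJ (m + 1) m m.le_succ ^ 2 * X (Fin.last m) ∈
      Ideal.span {X (Fin.last m)} ^ 2 := by
  set I : Ideal (P2 (m + 1)) := Ideal.span {X (Fin.last m)}
  set g : (Fin m → F2) → P2 (m + 1) := fun c => ∑ i, C (c i) * X (Fin.castLE m.le_succ i)
  have hX : X (Fin.last m) ∈ I := Ideal.mem_span_singleton_self _
  have hsnoc (c : Fin m → F2) (a : F2) :
      ∑ i, C (Fin.snoc (α := fun _ => F2) c a i) * X (Fin.castLE le_rfl i) =
        g c + C a * X (Fin.last m) := by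
    simp only [Fin.castLE_refl, Fin.sum_univ_castSucc, Fin.snoc_castSucc, Fin.snoc_last]
    rfl
  have hfull : ∏ c, (g c + X (Fin.last m)) =
      X (Fin.last m) * ∏ c ∈ Finset.univ.filter (· ≠ 0), (g c + X (Fin.last m)) := by
    rw [Finset.filter_ne', ← Finset.mul_prod_erase _ _ (Finset.mem_univ 0)]
    simp [g]
  have hsplit : omegaJ (m + 1) (m + 1) le_rfl =
      omegaJ (m + 1) m m.le_succ * (X (Fin.last m) *
        ∏ c ∈ Finset.univ.filter (· ≠ 0), (g c + X (Fin.last m))) := by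
    rw [omegaJ, prod_filter_ne_zero_eq_mul_prod_snoc]
    simp only [hsnoc, map_zero, zero_mul, add_zero, map_one, one_mul, hfull]
    rfl
  have hmod : ∏ c ∈ Finset.univ.filter (· ≠ 0), (g c + X (Fin.last m)) -
      omegaJ (m + 1) m m.le_succ ∈ I := by
    rw [← Ideal.Quotient.eq, omegaJ, map_prod, map_prod]
    simp [Ideal.Quotient.eq_zero_iff_mem.mpr hX, g]
  rw [hsplit, pow_two]
  convert Ideal.mul_mem_mul (Ideal.mul_mem_left _ (omegaJ (m + 1) m m.le_succ) hX) hmod using 1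
  ring

theorem exists_common_factor_omegaSeq (m : ℕ) (i : Fin (m + 2) → ℕ)
    (h : 2 * i (Fin.last (m + 1)) ≤ i (Fin.last m).castSucc) :
    ∃ B : P2 (m + 2),
      omegaSeq (m + 2) i = B * omegaJ (m + 2) (m + 2) le_rfl ^ i (Fin.last (m + 1)) ∧
      rename (Fin.castLE (m + 1).le_succ)
          (omegaSeq (m + 1) fun j => i (Fin.castLE (m + 1).le_succ j)) =
        B * omegaJ (m + 2) (m + 1) (m + 1).le_succ ^ (2 * i (Fin.last (m + 1))) := by
  refine ⟨∏ j : Fin (m + 1),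
    omegaJ (m + 2) (j + 1) (by omega) ^ (i j.castSucc - 2 * i j.succ), ?_, ?_⟩
  · rw [omegaSeq, Fin.prod_univ_castSucc]
    congr 1
    · refine Finset.prod_congr rfl fun j _ => ?_
      rw [dif_pos (by simp [j.is_le])]
      rfl
    · simp
  · rw [omegaSeq, map_prod, Fin.prod_univ_castSucc, Fin.prod_univ_castSucc, mul_assoc]
    congr 1
    · refine Finset.prod_congr rfl fun j _ => ?_
      rw [map_pow, omegaJ_rename, dif_pos (by simp)]
      rfl
    · simp only [map_pow, omegaJ_rename, Fin.val_last]
      rw [← pow_add]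
      simp only [lt_self_iff_false, dite_false, mul_zero, tsub_zero, Fin.succ_last,
        Nat.sub_add_cancel h]
      rfl

/-- For `n ≥ 2` and `i_j ≥ 2 i_{j+1}` (`1 ≤ j ≤ n-1`), writing
`ω_{i_1,…,i_n} = ∑_j p_j x_n^j` with `p_j ∈ F_2[x_1,…,x_{n-1}]`, one has `p_j = 0` for
`j < i_n` and `p_{i_n} = ω_{i_1,…,i_{n-1}}`; equivalently,
`ω_{i_1,…,i_n} = ω_{i_1,…,i_{n-1}} · x_n^{i_n} + r` where every monomial of `r` has
exponent of `x_n` strictly greater than `i_n`. -/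
theorem omegaSeq_expansion_last_variable (n : ℕ) (hn : 2 ≤ n) (i : Fin n → ℕ)
    (hcond : ∀ (j : Fin n) (h : j.val + 1 < n), 2 * i ⟨j.val + 1, h⟩ ≤ i j) :
    ∃ r : P2 n,
      omegaSeq n i =
        MvPolynomial.rename (Fin.castLE (Nat.sub_le n 1))
            (omegaSeq (n - 1) (fun j => i (Fin.castLE (Nat.sub_le n 1) j))) *
          MvPolynomial.X (⟨n - 1, by omega⟩ : Fin n) ^ i ⟨n - 1, by omega⟩ + r ∧
      ∀ d ∈ r.support, i (⟨n - 1, by omega⟩ : Fin n) < d ⟨n - 1, by omega⟩ := by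
  obtain ⟨m, rfl⟩ : ∃ m, n = m + 2 := ⟨n - 2, by omega⟩
  show ∃ r : P2 (m + 2),
      omegaSeq (m + 2) i =
        rename (Fin.castLE (m + 1).le_succ)
            (omegaSeq (m + 1) fun j => i (Fin.castLE (m + 1).le_succ j)) *
          X (Fin.last (m + 1)) ^ i (Fin.last (m + 1)) + r ∧
      ∀ d ∈ r.support, i (Fin.last (m + 1)) < d (Fin.last (m + 1))
  set k := i (Fin.last (m + 1))
  obtain ⟨B, hω, hω'⟩ := exists_common_factor_omegaSeq m i (hcond (Fin.last m).castSucc (by simp))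
  have hX : X (Fin.last (m + 1)) ∈ Ideal.span {(X (Fin.last (m + 1)) : P2 (m + 2))} :=
    Ideal.mem_span_singleton_self _
  have hpow := Ideal.pow_sub_pow_mem_pow_succ (Ideal.mul_mem_left _ _ hX)
    (omegaJ_succ_sub_mem (m + 1)) k
  rw [Ideal.span_singleton_pow] at hpow
  refine ⟨B * (omegaJ (m + 2) (m + 2) le_rfl ^ k -
      (omegaJ (m + 2) (m + 1) (m + 1).le_succ ^ 2 * X (Fin.last (m + 1))) ^ k), ?_, ?_⟩
  · rw [hω, hω']
    ring
  · exact (mem_span_X_pow_iff _ _ _).1 (Ideal.mul_mem_left _ B hpow)
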